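/- Let T be a monad whose Kleisli hom-sets are complete join-semilattices with composition preserving non-empty joins, and such that ⊥ = ⊥ · f♯ for all f : X → Y in C. Define the saturation α* = ⋁_{n≥0} αⁿ and the trace tr_α = μx.(x·α) = ⋁_{n} ⊥·αⁿ. Then: (1) every kernel bisimulation on α is a weak bisimulation on α (i.e., a kernel bisimulation on α*), and (2) tr_α = tr_{α*}; in particular, weak bisimilarity implies weak trace equivalence. -/

import Mathlib

/-!
A coalgebra homomorphism `h` from `α` to `γ` commutes with all Kleisli powers, hence, since
composition preserves the joins, with the saturations: `h ≫ γ* = α* ≫ h`.  So the cospan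
presenting a kernel bisimulation on `α` also presents one on `α*`.

For traces, write `t = ⋁ₙ αⁿ ≫ b`.  Since `αᵐ ≫ αⁿ = αᵐ⁺ⁿ`, the map `t` is a fixed point of
`α* ≫ -`, hence of every `α*ⁿ ≫ -`.  As `b = α⁰ ≫ b ≤ t`, monotonicity gives
`α*ⁿ ≫ b ≤ t`, while `t = α* ≫ b` is the term `n = 1` of `⋁ₙ α*ⁿ ≫ b`.
-/

open CategoryTheory CategoryTheory.Limits

variable {C : Type*} [Category C] (T : Monad C)

/-- An object of `C` viewed as an object of the Kleisli category of `T`. -/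
def kObj (X : C) : Kleisli T := Kleisli.mk T X

/-- Kleisli powers `αⁿ` of an endomorphism, with `α⁰ = 1 = η`. -/
def kPow {X : Kleisli T} (α : X ⟶ X) : ℕ → (X ⟶ X)
  | 0 => 𝟙 X
  | n + 1 => kPow α n ≫ α

/-- A kernel bisimulation on a `T`-coalgebra `α : X → TX` (a Kleisli endomorphism
`α : X ⊸ X`): a jointly monic span presented as the pullback of a cospan of coalgebra
homomorphisms `f, g` out of `α` into some coalgebra `γ`.  The homomorphism condition
`γ ∘ f = Tf ∘ α` reads `f♯ ≫ γ = α ≫ f♯` in `Kl(T)`. -/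
def IsKernelBisim {X R : C} (α : kObj T X ⟶ kObj T X) (p₁ p₂ : R ⟶ X) : Prop :=
  ∃ (Z : C) (γ : kObj T Z ⟶ kObj T Z) (f g : X ⟶ Z),
    ((Kleisli.Adjunction.toKleisli T).map f ≫ γ =
        α ≫ (Kleisli.Adjunction.toKleisli T).map f) ∧
    ((Kleisli.Adjunction.toKleisli T).map g ≫ γ =
        α ≫ (Kleisli.Adjunction.toKleisli T).map g) ∧
    IsPullback p₁ p₂ f g

structure CompPreservesNonemptySups (D : Type*) [Category D]
    [∀ X Y : D, CompleteLattice (X ⟶ Y)] : Prop where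
  comp_sSup {X Y Z : D} (f : X ⟶ Y) (S : Set (Y ⟶ Z)) :
    S.Nonempty → f ≫ sSup S = sSup ((fun g => f ≫ g) '' S)
  sSup_comp {X Y Z : D} (g : Y ⟶ Z) (S : Set (X ⟶ Y)) :
    S.Nonempty → sSup S ≫ g = sSup ((fun f => f ≫ g) '' S)

namespace CompPreservesNonemptySups

variable {D : Type*} [Category D] [∀ X Y : D, CompleteLattice (X ⟶ Y)] {X Y Z : D}

theorem comp_iSup (hD : CompPreservesNonemptySups D) {ι : Sort*} [Nonempty ι]
    (f : X ⟶ Y) (g : ι → (Y ⟶ Z)) : f ≫ ⨆ i, g i = ⨆ i, f ≫ g i := by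
  rw [iSup, hD.comp_sSup f _ (Set.range_nonempty g), ← Set.range_comp]
  rfl

theorem iSup_comp (hD : CompPreservesNonemptySups D) {ι : Sort*} [Nonempty ι]
    (f : ι → (X ⟶ Y)) (g : Y ⟶ Z) : (⨆ i, f i) ≫ g = ⨆ i, f i ≫ g := by
  rw [iSup, hD.sSup_comp g _ (Set.range_nonempty f), ← Set.range_comp]
  rfl

theorem comp_mono (hD : CompPreservesNonemptySups D) (f : X ⟶ Y) :
    Monotone (fun g : Y ⟶ Z => f ≫ g) := by
  intro g₁ g₂ hg
  have hpair := hD.comp_sSup f {g₁, g₂} (Set.insert_nonempty _ _)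
  rw [sSup_pair, Set.image_pair, sSup_pair, sup_eq_right.mpr hg] at hpair
  change f ≫ g₁ ≤ f ≫ g₂
  rw [hpair]
  exact le_sup_left

end CompPreservesNonemptySups

section Powers

variable {T}

theorem kPow_add {X : Kleisli T} (α : X ⟶ X) (m n : ℕ) :
    kPow T α m ≫ kPow T α n = kPow T α (m + n) := by
  induction n with
  | zero => exact Category.comp_id _
  | succ n ih => exact (Category.assoc _ _ _).symm.trans (congrArg (· ≫ α) ih)

theorem comp_kPow_of_comp_eq {X Y : Kleisli T} {α : X ⟶ X} {γ : Y ⟶ Y} {h : X ⟶ Y}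
    (hh : h ≫ γ = α ≫ h) (n : ℕ) : h ≫ kPow T γ n = kPow T α n ≫ h := by
  induction n with
  | zero => exact (Category.comp_id h).trans (Category.id_comp h).symm
  | succ n ih =>
    change h ≫ kPow T γ n ≫ γ = (kPow T α n ≫ α) ≫ h
    rw [← Category.assoc, ih, Category.assoc, hh, Category.assoc]

end Powers

section Saturation

variable [∀ X Y : Kleisli T, CompleteLattice (X ⟶ Y)]

def kSaturation {X : Kleisli T} (α : X ⟶ X) : X ⟶ X := ⨆ n, kPow T α n

/-- With `b = ⊥ : X ⟶ 0` this is the trace `tr_α = μx.(x·α)`. -/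
def kTrace {X Y : Kleisli T} (α : X ⟶ X) (b : X ⟶ Y) : X ⟶ Y := ⨆ n, kPow T α n ≫ b

variable {T}

theorem comp_kSaturation_of_comp_eq (hK : CompPreservesNonemptySups (Kleisli T))
    {X Y : Kleisli T} {α : X ⟶ X} {γ : Y ⟶ Y} {h : X ⟶ Y} (hh : h ≫ γ = α ≫ h) :
    h ≫ kSaturation T γ = kSaturation T α ≫ h := by
  rw [kSaturation, kSaturation, hK.comp_iSup, hK.iSup_comp]
  exact congrArg iSup (funext (comp_kPow_of_comp_eq hh))

theorem IsKernelBisim.to_kSaturation (hK : CompPreservesNonemptySups (Kleisli T)) {X R : C}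
    {α : kObj T X ⟶ kObj T X} {p₁ p₂ : R ⟶ X} (hb : IsKernelBisim T α p₁ p₂) :
    IsKernelBisim T (kSaturation T α) p₁ p₂ := by
  obtain ⟨Z, γ, f, g, hf, hg, hpb⟩ := hb
  exact ⟨Z, kSaturation T γ, f, g, comp_kSaturation_of_comp_eq hK hf,
    comp_kSaturation_of_comp_eq hK hg, hpb⟩

theorem kSaturation_comp_kTrace (hK : CompPreservesNonemptySups (Kleisli T))
    {X Y : Kleisli T} (α : X ⟶ X) (b : X ⟶ Y) :
    kSaturation T α ≫ kTrace T α b = kTrace T α b := by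
  rw [kSaturation, hK.iSup_comp]
  refine le_antisymm (iSup_le fun m => ?_) (le_iSup_of_le 0 (Category.id_comp _).ge)
  rw [kTrace, hK.comp_iSup]
  refine iSup_le fun n => ?_
  rw [← Category.assoc, kPow_add]
  exact le_iSup (fun k => kPow T α k ≫ b) (m + n)

theorem kPow_kSaturation_comp_kTrace (hK : CompPreservesNonemptySups (Kleisli T))
    {X Y : Kleisli T} (α : X ⟶ X) (b : X ⟶ Y) (n : ℕ) :
    kPow T (kSaturation T α) n ≫ kTrace T α b = kTrace T α b := by
  induction n with
  | zero => exact Category.id_comp _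
  | succ n ih =>
    change (kPow T (kSaturation T α) n ≫ kSaturation T α) ≫ kTrace T α b = kTrace T α b
    rw [Category.assoc, kSaturation_comp_kTrace hK, ih]

theorem kTrace_kSaturation (hK : CompPreservesNonemptySups (Kleisli T))
    {X Y : Kleisli T} (α : X ⟶ X) (b : X ⟶ Y) :
    kTrace T (kSaturation T α) b = kTrace T α b := by
  have hb : b ≤ kTrace T α b := le_iSup_of_le 0 (Category.id_comp b).ge
  have hone : kPow T (kSaturation T α) 1 ≫ b = kTrace T α b := by
    rw [kPow, kPow, Category.id_comp, kSaturation, hK.iSup_comp, kTrace]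
  refine le_antisymm (iSup_le fun n => ?_) (le_iSup_of_le 1 hone.ge)
  calc kPow T (kSaturation T α) n ≫ b
      ≤ kPow T (kSaturation T α) n ≫ kTrace T α b := hK.comp_mono _ hb
    _ = kTrace T α b := kPow_kSaturation_comp_kTrace hK α b n

end Saturation

theorem strong_bisim_weak_bisim_and_weak_trace [HasInitial C]
    [∀ X Y : Kleisli T, CompleteLattice (X ⟶ Y)]
    -- composition preserves non-empty joins on both sides
    (hpost : ∀ {X Y Z : Kleisli T} (f : X ⟶ Y) (S : Set (Y ⟶ Z)), S.Nonempty →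
      f ≫ sSup S = sSup ((fun g => f ≫ g) '' S))
    (hpre : ∀ {X Y Z : Kleisli T} (g : Y ⟶ Z) (S : Set (X ⟶ Y)), S.Nonempty →
      sSup S ≫ g = sSup ((fun f => f ≫ g) '' S))
    -- `⊥ = ⊥ · f♯` for every morphism `f` of `C`
    (hbot : ∀ {X Y : C} (f : X ⟶ Y),
      (Kleisli.Adjunction.toKleisli T).map f ≫ (⊥ : kObj T Y ⟶ kObj T (⊥_ C)) =
        (⊥ : kObj T X ⟶ kObj T (⊥_ C))) :
    -- (1) every kernel bisimulation on `α` is one on `α* = ⋁ₙ αⁿ` (a weak bisimulation)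
    (∀ {X R : C} (α : kObj T X ⟶ kObj T X) (p₁ p₂ : R ⟶ X),
      IsKernelBisim T α p₁ p₂ → IsKernelBisim T (⨆ n : ℕ, kPow T α n) p₁ p₂) ∧
    -- (2) `tr_α = tr_{α*}` where `tr_β = ⋁ₙ βⁿ ≫ ⊥ = μx.(x·β)`
    (∀ {X : C} (α : kObj T X ⟶ kObj T X),
      (⨆ n : ℕ, kPow T α n ≫ (⊥ : kObj T X ⟶ kObj T (⊥_ C))) =
        ⨆ n : ℕ, kPow T (⨆ m : ℕ, kPow T α m) n ≫ (⊥ : kObj T X ⟶ kObj T (⊥_ C))) := by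
  have hK : CompPreservesNonemptySups (Kleisli T) := ⟨hpost, hpre⟩
  exact ⟨fun _ _ _ hb => hb.to_kSaturation hK, fun α => (kTrace_kSaturation hK α ⊥).symm⟩
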